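/- For all natural numbers n and k, the classical Stirling numbers of the second kind and the higher-order Bernoulli numbers of negative order satisfy Gessel's relation S(n+k, n) = C(n+k, k) · B_k^{(-n)}, where C(n+k,k) is the ordinary binomial coefficient. -/

import Mathlib

open Finset

/-- The classical Stirling numbers of the second kind, defined by the recurrence
`S(n+1,k) = S(n,k-1) + k·S(n,k)`, with `S(0,0) = 1`, `S(n,0) = 0` for `n ≥ 1`,
and `S(n,k) = 0` for `k > n`. -/
def stirling2 : ℕ → ℕ → ℕ
  | 0, 0 => 1
  | 0, _ + 1 => 0
  | _ + 1, 0 => 0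
  | n + 1, k + 1 => stirling2 n k + (k + 1) * stirling2 n (k + 1)

/-- The higher-order Bernoulli numbers of negative order `B_k^{(-n)}`, defined by the formal
exponential generating function `∑_{j≥0} B_j^{(-n)} t^j/j! = ((e^t - 1)/t)^n`, i.e. the
`n`-th power of the formal power series `∑_{m≥0} t^m/(m+1)!`. -/
noncomputable def bernoulliNegOrder (n k : ℕ) : ℚ :=
  (k.factorial : ℚ) *
    PowerSeries.coeff k ((PowerSeries.mk fun m => (1 : ℚ) / (m + 1).factorial) ^ n)

/-!
Differentiating `(e^t - 1)^(n+1)` gives `(n+1)((e^t - 1)^n + (e^t - 1)^(n+1))`; on coefficients this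
is exactly the recurrence of `S`, so `m! [t^m] (e^t - 1)^n = n! S(m, n)`. Since
`e^t - 1 = t · ∑ t^m/(m+1)!`, we get `B_k^{(-n)} = k! [t^(n+k)] (e^t - 1)^n = k! n! S(n+k, n)/(n+k)!`,
and `C(n+k, k) k! n! = (n+k)!`.
-/

open PowerSeries Nat

section
variable (A : Type*) [CommRing A] [Algebra ℚ A]

theorem derivative_exp_sub_one_pow (n : ℕ) :
    d⁄dX A ((exp A - 1) ^ (n + 1)) = (n + 1) • ((exp A - 1) ^ n + (exp A - 1) ^ (n + 1)) := by
  rw [Derivation.leibniz_pow, map_sub, derivative_exp, Derivation.map_one_eq_zero, sub_zero,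
    Nat.add_sub_cancel, smul_eq_mul, pow_succ]
  ring

theorem factorial_mul_coeff_exp_sub_one_pow (m n : ℕ) :
    (m ! : A) * coeff m ((exp A - 1) ^ n) = n ! * stirling2 m n := by
  induction m generalizing n with
  | zero =>
    cases n <;> simp [stirling2]
  | succ m ih =>
    cases n with
    | zero => simp [stirling2, coeff_one]
    | succ n =>
      have hcoeff := congrArg (coeff m) (derivative_exp_sub_one_pow A n)
      rw [coeff_derivative, map_nsmul, map_add, nsmul_eq_mul, Nat.cast_succ] at hcoeff
      calc ((m + 1)! : A) * coeff (m + 1) ((exp A - 1) ^ (n + 1))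
          = (n + 1) * ((m ! : A) * coeff m ((exp A - 1) ^ n) +
              (m ! : A) * coeff m ((exp A - 1) ^ (n + 1))) := by
            push_cast [factorial_succ]
            linear_combination (m ! : A) * hcoeff
        _ = (n + 1)! * stirling2 (m + 1) (n + 1) := by
            rw [ih, ih, stirling2, factorial_succ]
            push_cast
            ring
end

theorem X_mul_mk_inv_factorial_succ :
    X * PowerSeries.mk (fun m => (1 : ℚ) / (m + 1)!) = exp ℚ - 1 := by
  ext (_ | m) <;> simp [coeff_one]

theorem stirling2_eq_choose_mul_bernoulliNegOrder (n k : ℕ) :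
    (stirling2 (n + k) n : ℚ) = ((n + k).choose k : ℚ) * bernoulliNegOrder n k := by
  have hshift : coeff k (PowerSeries.mk (fun m => (1 : ℚ) / (m + 1)!) ^ n) =
      coeff (n + k) ((exp ℚ - 1) ^ n) := by
    rw [← X_mul_mk_inv_factorial_succ, mul_pow, add_comm, coeff_X_pow_mul]
  have hchoose : ((n + k).choose k * n ! * k ! : ℚ) = (n + k)! := by
    exact_mod_cast add_choose_mul_factorial_mul_factorial n k
  apply mul_left_cancel₀ (cast_ne_zero.mpr (factorial_ne_zero n) : (n ! : ℚ) ≠ 0)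
  rw [bernoulliNegOrder, hshift, ← factorial_mul_coeff_exp_sub_one_pow, ← hchoose]
  ring
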